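/- For a rank score statistic with 'first' tie-breaking, replacing the infinite penalty by any finite constant Δ > max_{j: z_j=1} y_j − min_{j: z_j=0} y_j gives the same statistic value: with ξ_i = ∞ for i ∈ I_k, ξ_i = c otherwise, and ζ_i = Δ for i ∈ I_k, ζ_i = c otherwise, one has t(z, y − z∘ξ) = t(z, y − z∘ζ). -/
import Mathlib


open Finset

/-- Rank with the "first" method for ties, for extended-real outcome vectors. -/
noncomputable def rankE (n : ℕ) (v : Fin n → EReal) (i : Fin n) : ℕ :=
  (Finset.univ.filter fun j => v j < v i).card +
  (Finset.univ.filter fun j => v j = v i ∧ j ≤ i).card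

lemma rankE_lt_of_lt (n : ℕ) (v : Fin n → EReal) {i a : Fin n} (h : v i < v a) :
    rankE n v i < rankE n v a := by
  unfold rankE
  have hd : Disjoint (univ.filter fun j => v j < v i)
      (univ.filter fun j => v j = v i ∧ j ≤ i) := by
    rw [Finset.disjoint_left]
    intro j h1 h2
    simp only [mem_filter, mem_univ, true_and] at h1 h2
    exact absurd (h2.1 ▸ h1) (lt_irrefl _)
  have h1 : (univ.filter fun j => v j < v i) ∪ (univ.filter fun j => v j = v i ∧ j ≤ i)
      ⊆ univ.filter fun j => v j < v a := by
    intro j hj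
    simp only [mem_union, mem_filter, mem_univ, true_and] at hj ⊢
    rcases hj with hj | ⟨hj, _⟩
    · exact hj.trans h
    · exact hj ▸ h
  have h2 : (univ.filter fun j => v j < v i).card
      + (univ.filter fun j => v j = v i ∧ j ≤ i).card
      ≤ (univ.filter fun j => v j < v a).card := by
    rw [← Finset.card_union_of_disjoint hd]
    exact Finset.card_le_card h1
  have h3 : 0 < (univ.filter fun j => v j = v a ∧ j ≤ a).card := by
    apply Finset.card_pos.mpr
    exact ⟨a, by simp⟩
  omega

lemma rankE_injective (n : ℕ) (v : Fin n → EReal) : Function.Injective (rankE n v) := by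
  intro i a hia
  by_contra hne
  rcases lt_trichotomy (v i) (v a) with h | h | h
  · exact absurd hia (Nat.ne_of_lt (rankE_lt_of_lt n v h))
  · have hA : (univ.filter fun j => v j < v i) = (univ.filter fun j => v j < v a) := by
      apply Finset.filter_congr
      intro j _
      rw [h]
    rcases lt_trichotomy i a with hlt | heq | hgt
    · have hB : (univ.filter fun j => v j = v i ∧ j ≤ i).card
          < (univ.filter fun j => v j = v a ∧ j ≤ a).card := by
        apply Finset.card_lt_card
        constructor
        · intro j hj
          simp only [mem_filter, mem_univ, true_and] at hj ⊢
          exact ⟨hj.1.trans h, hj.2.trans hlt.le⟩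
        · intro hsub
          have := hsub (by simp : a ∈ univ.filter fun j => v j = v a ∧ j ≤ a)
          simp only [mem_filter, mem_univ, true_and] at this
          exact absurd this.2 (not_le.mpr hlt)
      unfold rankE at hia
      rw [hA] at hia
      omega
    · exact hne heq
    · have hB : (univ.filter fun j => v j = v a ∧ j ≤ a).card
          < (univ.filter fun j => v j = v i ∧ j ≤ i).card := by
        apply Finset.card_lt_card
        constructor
        · intro j hj
          simp only [mem_filter, mem_univ, true_and] at hj ⊢
          exact ⟨hj.1.trans h.symm, hj.2.trans hgt.le⟩
        · intro hsub
          have := hsub (by simp : i ∈ univ.filter fun j => v j = v i ∧ j ≤ i)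
          simp only [mem_filter, mem_univ, true_and] at this
          exact absurd this.2 (not_le.mpr hgt)
      unfold rankE at hia
      rw [hA] at hia
      omega
  · exact absurd hia.symm (Nat.ne_of_lt (rankE_lt_of_lt n v h))

lemma rankE_mem_Icc (n : ℕ) (v : Fin n → EReal) (i : Fin n) :
    rankE n v i ∈ Finset.Icc 1 n := by
  unfold rankE
  have hd : Disjoint (univ.filter fun j => v j < v i)
      (univ.filter fun j => v j = v i ∧ j ≤ i) := by
    rw [Finset.disjoint_left]
    intro j h1 h2
    simp only [mem_filter, mem_univ, true_and] at h1 h2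
    exact absurd (h2.1 ▸ h1) (lt_irrefl _)
  have h1 : (univ.filter fun j => v j < v i).card
      + (univ.filter fun j => v j = v i ∧ j ≤ i).card ≤ n := by
    rw [← Finset.card_union_of_disjoint hd]
    calc _ ≤ (univ : Finset (Fin n)).card := Finset.card_le_card (Finset.subset_univ _)
    _ = n := by simp
  have h2 : 0 < (univ.filter fun j => v j = v i ∧ j ≤ i).card :=
    Finset.card_pos.mpr ⟨i, by simp⟩
  simp only [Finset.mem_Icc]
  omega

lemma sum_phi_rankE (n : ℕ) (v : Fin n → EReal) (φ : ℕ → ℝ) :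
    ∑ i, φ (rankE n v i) = ∑ k ∈ Finset.Icc 1 n, φ k := by
  have himg : (univ : Finset (Fin n)).image (rankE n v) = Finset.Icc 1 n := by
    apply Finset.eq_of_subset_of_card_le
    · intro k hk
      obtain ⟨i, _, rfl⟩ := Finset.mem_image.mp hk
      exact rankE_mem_Icc n v i
    · rw [Finset.card_image_of_injective _ (rankE_injective n v)]
      simp [Nat.card_Icc]
  rw [← himg, Finset.sum_image (fun i _ j _ h => rankE_injective n v h)]

/-- replacing the infinite penalty on `I_k` by any finite `Δ` exceeding
the gap between every treated and every control outcome leaves the rank score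
statistic unchanged. -/
theorem stmt14 (n : ℕ) (T Ik : Finset (Fin n)) (hIk : Ik ⊆ T)
    (y : Fin n → ℝ) (c Δ : ℝ)
    (hΔ : ∀ i ∈ T, ∀ j ∉ T, y i - y j < Δ)
    (φ : ℕ → ℝ) (hφ : Monotone φ) :
    (∑ i ∈ T, φ (rankE n
        (fun j => if j ∈ Ik then (⊥ : EReal)
          else (((y j - if j ∈ T then c else 0 : ℝ)) : EReal)) i))
      = ∑ i ∈ T, φ (rankE n
          (fun j => (((y j - if j ∈ Ik then Δ else if j ∈ T then c else 0 : ℝ)) : EReal)) i) := by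
  set v : Fin n → EReal := fun j => if j ∈ Ik then (⊥ : EReal)
    else (((y j - if j ∈ T then c else 0 : ℝ)) : EReal) with hv
  set w : Fin n → EReal := fun j =>
    (((y j - if j ∈ Ik then Δ else if j ∈ T then c else 0 : ℝ)) : EReal) with hw
  -- control ranks agree
  have hcw : ∀ i ∉ T, rankE n v i = rankE n w i := by
    intro i hi
    have hiIk : i ∉ Ik := fun h => hi (hIk h)
    have hvi : v i = ((y i - 0 : ℝ) : EReal) := by simp [hv, hiIk, hi]
    have hwi : w i = ((y i - 0 : ℝ) : EReal) := by simp [hw, hiIk, hi]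
    have key : ∀ j, (v j < v i ↔ w j < w i) ∧ (v j = v i ↔ w j = w i) := by
      intro j
      by_cases hj : j ∈ Ik
      · have hvj : v j = ⊥ := by simp [hv, hj]
        have hwj : w j = ((y j - Δ : ℝ) : EReal) := by simp [hw, hj]
        have hjT : j ∈ T := hIk hj
        have hlt : y j - Δ < y i - 0 := by
          have := hΔ j hjT i hi
          linarith
        constructor
        · rw [hvj, hwj, hvi, hwi]
          simp only [EReal.coe_lt_coe_iff]
          constructor
          · intro _; exact hlt
          · intro _; exact bot_lt_iff_ne_bot.mpr (by simp)
        · rw [hvj, hwj, hvi, hwi]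
          constructor
          · intro h; exact absurd h.symm (by simp)
          · intro h
            exact absurd (EReal.coe_lt_coe_iff.mpr hlt) (h ▸ lt_irrefl _)
      · have hvw : v j = w j := by simp [hv, hw, hj]
        have hvwi : v i = w i := by rw [hvi, hwi]
        rw [hvw, hvwi]
        exact ⟨Iff.rfl, Iff.rfl⟩
    unfold rankE
    rw [Finset.filter_congr (fun j _ => (key j).1),
      Finset.filter_congr (fun j _ => and_congr_left' (key j).2)]
  -- total sums agree
  have htot : ∑ i, φ (rankE n v i) = ∑ i, φ (rankE n w i) := by
    rw [sum_phi_rankE, sum_phi_rankE]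
  have hctrl : ∑ i ∈ univ \ T, φ (rankE n v i) = ∑ i ∈ univ \ T, φ (rankE n w i) :=
    Finset.sum_congr rfl fun i hi => by rw [hcw i (Finset.mem_sdiff.mp hi).2]
  have hv' := Finset.sum_sdiff (f := fun i => φ (rankE n v i)) (Finset.subset_univ T)
  have hw' := Finset.sum_sdiff (f := fun i => φ (rankE n w i)) (Finset.subset_univ T)
  linarith
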